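/- arXiv:2012.06808 — 5 statements merged into one kernel-verified Lean document; each statement's English description precedes it below -/
import Mathlib

section
/- Let I be an ideal on ℕ containing all finite sets, let x be a sequence in a metric space S, and suppose there exists a compact set K ⊆ S with {n : x_n ∈ K} ∈ I⁺ (i.e., not in I). Then x has at least one I-cluster point lying in K, where η is an I-cluster point of x if {n : x_n ∈ U} ∉ I for every open neighborhood U of η. -/
/-- An ideal on ℕ: closed under subsets and finite unions, contains all finite
sets, and is proper. -/
def IsIdeal (I : Set (Set ℕ)) : Prop :=
  (∀ ⦃A B : Set ℕ⦄, A ∈ I → B ⊆ A → B ∈ I) ∧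
  (∀ ⦃A B : Set ℕ⦄, A ∈ I → B ∈ I → A ∪ B ∈ I) ∧
  (∀ A : Set ℕ, A.Finite → A ∈ I) ∧
  (Set.univ : Set ℕ) ∉ I

/-- Translation invariance of an ideal on ℕ: `(A + k) ∩ ℕ ∈ I`. -/
def TransInv (I : Set (Set ℕ)) : Prop :=
  ∀ A ∈ I, ∀ k : ℤ, {n : ℕ | ∃ a ∈ A, (a : ℤ) + k = (n : ℤ)} ∈ I

/-- η is an I-cluster point of x. -/
def IClusterPt {S : Type*} [TopologicalSpace S] (I : Set (Set ℕ)) (x : ℕ → S) (η : S) : Prop :=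
  ∀ U : Set S, IsOpen U → η ∈ U → {n : ℕ | x n ∈ U} ∉ I

/-- x is I-convergent to η. -/
def IConv {S : Type*} [TopologicalSpace S] (I : Set (Set ℕ)) (x : ℕ → S) (η : S) : Prop :=
  ∀ U : Set S, IsOpen U → η ∈ U → {n : ℕ | x n ∈ U}ᶜ ∈ I

/-- The I-limit inferior of a real sequence. -/
noncomputable def ILiminf (I : Set (Set ℕ)) (x : ℕ → ℝ) : ℝ :=
  sInf {r : ℝ | {n : ℕ | x n > r} ∉ I}

/-- The I-limit superior of a real sequence. -/
noncomputable def ILimsup (I : Set (Set ℕ)) (x : ℕ → ℝ) : ℝ :=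
  - ILiminf I (fun n => - x n)

/-!
For the dual filter `F = {A | Aᶜ ∈ I}`, the `I`-positive sets are the `F`-frequent ones, so
`I`-cluster points of `x` are cluster points of `x` along `F`. Since `x n ∈ K` frequently along
`F`, compactness of `K` provides such a cluster point in `K`.
-/

def IsIdeal.dualFilter {I : Set (Set ℕ)} (hI : IsIdeal I) : Filter ℕ :=
  Filter.comk (· ∈ I) (hI.2.2.1 ∅ Set.finite_empty) (fun _ ht _ hst => hI.1 ht hst)
    (fun _ hs _ ht => hI.2.1 hs ht)

theorem IsIdeal.frequently_dualFilter_iff {I : Set (Set ℕ)} (hI : IsIdeal I) {p : ℕ → Prop} :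
    (∃ᶠ n in hI.dualFilter, p n) ↔ {n | p n} ∉ I := by
  simp only [Filter.Frequently, Filter.Eventually, IsIdeal.dualFilter, Filter.mem_comk,
    Set.compl_ofPred, not_not]

theorem IsIdeal.iClusterPt_iff_mapClusterPt {S : Type*} [TopologicalSpace S] {I : Set (Set ℕ)}
    (hI : IsIdeal I) {x : ℕ → S} {η : S} :
    IClusterPt I x η ↔ MapClusterPt η hI.dualFilter x := by
  simp only [(nhds_basis_opens η).mapClusterPt_iff_frequently, hI.frequently_dualFilter_iff,
    IClusterPt, and_imp]
  exact forall_congr' fun _ => Imp.swap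

theorem cluster_point_exists_in_compact {S : Type*} [MetricSpace S]
    (I : Set (Set ℕ)) (hI : IsIdeal I) (x : ℕ → S) (K : Set S)
    (hK : IsCompact K) (hpos : {n : ℕ | x n ∈ K} ∉ I) :
    ∃ η ∈ K, IClusterPt I x η := by
  obtain ⟨η, hηK, hη⟩ :=
    hK.exists_mapClusterPt_of_frequently (hI.frequently_dualFilter_iff.2 hpos)
  exact ⟨η, hηK, hI.iClusterPt_iff_mapClusterPt.2 hη⟩
end

section
/- Let I be an ideal on ℕ and x a sequence in a metric space S such that {n : x_n ∈ K} ∈ I* for some compact K ⊆ S. Then x is I-convergent to η if and only if Γ_x(I) = {η}. -/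
/-! In the language of filters, `I`-convergence is convergence along the dual filter `I*`, and
`I`-cluster points are cluster points along `I*`, which is nontrivial because `I` is proper. For a
map that eventually stays in a compact subset of a Hausdorff space, a limit is the only cluster
point by separation; conversely a unique cluster point is a limit, because compactness yields a
cluster point in every closed set that is visited frequently. -/

open Filter Topology

namespace IsIdeal

variable {I : Set (Set ℕ)}

def dualFilter_s3 (hI : IsIdeal I) : Filter ℕ :=
  comk (· ∈ I) (hI.2.2.1 ∅ Set.finite_empty) (fun _ ht _ hst ↦ hI.1 ht hst)
    (fun _ hs _ ht ↦ hI.2.1 hs ht)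

theorem mem_dualFilter (hI : IsIdeal I) {A : Set ℕ} : A ∈ hI.dualFilter_s3 ↔ Aᶜ ∈ I :=
  Iff.rfl

theorem dualFilter_neBot (hI : IsIdeal I) : hI.dualFilter_s3.NeBot :=
  ⟨fun h ↦ hI.2.2.2 <| by simpa using hI.mem_dualFilter.1 (empty_mem_iff_bot.2 h)⟩

theorem frequently_dualFilter_iff_s3 (hI : IsIdeal I) {p : ℕ → Prop} :
    (∃ᶠ n in hI.dualFilter_s3, p n) ↔ {n | p n} ∉ I := by
  simp only [Filter.Frequently, Filter.Eventually, hI.mem_dualFilter, Set.compl_ofPred, not_not]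

variable {S : Type*} [TopologicalSpace S] {x : ℕ → S}

theorem iConv_iff_tendsto (hI : IsIdeal I) {η : S} :
    IConv I x η ↔ Tendsto x hI.dualFilter_s3 (𝓝 η) := by
  rw [(nhds_basis_opens η).tendsto_right_iff]
  exact forall_congr' fun _ ↦ ⟨fun h ⟨hη, hU⟩ ↦ h hU hη, fun h hU hη ↦ h ⟨hη, hU⟩⟩

theorem iClusterPt_iff_mapClusterPt_s3 (hI : IsIdeal I) {ξ : S} :
    IClusterPt I x ξ ↔ MapClusterPt ξ hI.dualFilter_s3 x := by
  simp only [(nhds_basis_opens ξ).mapClusterPt_iff_frequently, hI.frequently_dualFilter_iff_s3]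
  exact forall_congr' fun _ ↦ ⟨fun h ⟨hξ, hU⟩ ↦ h hU hξ, fun h hU hξ ↦ h ⟨hξ, hU⟩⟩

end IsIdeal

theorem MapClusterPt.eq_of_tendsto {X Y : Type*} [TopologicalSpace X] [T2Space X]
    {l : Filter Y} {f : Y → X} {x y : X} (hx : MapClusterPt x l f) (hy : Tendsto f l (𝓝 y)) :
    x = y :=
  eq_of_nhds_neBot (ClusterPt.mono hx hy)

theorem IsCompact.tendsto_nhds_iff_setOf_mapClusterPt_eq_singleton {X Y : Type*}
    [TopologicalSpace X] [T2Space X] {K : Set X} (hK : IsCompact K) {l : Filter Y} [l.NeBot]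
    {f : Y → X} (hf : ∀ᶠ y in l, f y ∈ K) {y : X} :
    Tendsto f l (𝓝 y) ↔ {x | MapClusterPt x l f} = {y} := by
  refine ⟨fun hy ↦ Set.ext fun x ↦ ⟨fun hx ↦ hx.eq_of_tendsto hy, ?_⟩, fun hy ↦ ?_⟩
  · rintro rfl
    exact hy.mapClusterPt
  · exact hK.tendsto_nhds_of_unique_mapClusterPt hf fun x _ hx ↦ hy.subset hx

theorem iconv_iff_singleton_cluster {S : Type*} [MetricSpace S]
    (I : Set (Set ℕ)) (hI : IsIdeal I) (x : ℕ → S) (K : Set S)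
    (hK : IsCompact K) (hKx : {n : ℕ | x n ∈ K}ᶜ ∈ I) (η : S) :
    IConv I x η ↔ {ξ : S | IClusterPt I x ξ} = {η} := by
  have := hI.dualFilter_neBot
  have hclusters : {ξ : S | IClusterPt I x ξ} = {ξ | MapClusterPt ξ hI.dualFilter_s3 x} :=
    Set.ext fun _ ↦ hI.iClusterPt_iff_mapClusterPt_s3
  rw [hI.iConv_iff_tendsto, hclusters]
  exact hK.tendsto_nhds_iff_setOf_mapClusterPt_eq_singleton (hI.mem_dualFilter.2 hKx)
end

section
/- Let S, S′ be metric spaces, I an ideal on ℕ, h : S → S′ a continuous function, and x a sequence in S such that {n : x_n ∈ K} ∈ I* for some compact K ⊆ S. Then the set of I-cluster points of the sequence (h(x_n)) equals the image under h of the set of I-cluster points of x, i.e., h(Γ_x(I)) = Γ_{h(x)}(I). -/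
/-! An `I`-cluster point of `x` is exactly a cluster point of `x` along the dual filter `I*`, so the
statement is an instance of a fact about cluster points along an arbitrary filter. Continuity gives
`⊆`. For `⊇`, refine `I*` by the indices where `h ∘ x` is near `ν`: the refined filter is still
proper and `x` is eventually in the compact set `K` along it, so `x` has a cluster point `η` along
it; `η` is also a cluster point along `I*`, and `h η = ν` because `S'` is Hausdorff. -/

open Filter Topology

section ClusterPoints

variable {ι X Y : Type*} [TopologicalSpace X] [TopologicalSpace Y] {F : Filter ι} {u : ι → X}
  {K : Set X} {f : X → Y}

theorem IsCompact.exists_mapClusterPt_of_mapClusterPt_comp [T2Space Y] (hK : IsCompact K)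
    (huK : ∀ᶠ n in F, u n ∈ K) (hf : Continuous f) {y : Y} (hy : MapClusterPt y F (f ∘ u)) :
    ∃ x ∈ K, MapClusterPt x F u ∧ f x = y := by
  let G := comap (f ∘ u) (𝓝 y) ⊓ F
  have : G.NeBot := neBot_inf_comap_iff_map'.2 hy
  obtain ⟨x, hxK, hxG⟩ := hK.exists_mapClusterPt (u := u) (f := G)
    (tendsto_principal.2 (huK.filter_mono inf_le_right))
  have hfuG : Tendsto (f ∘ u) G (𝓝 y) := tendsto_comap.mono_left inf_le_left
  have hfx : ClusterPt (f x) (𝓝 y) := (hxG.continuousAt_comp hf.continuousAt).clusterPt.mono hfuG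
  exact ⟨x, hxK, hxG.mono inf_le_right, eq_of_nhds_neBot hfx⟩

theorem IsCompact.image_setOf_mapClusterPt [T2Space Y] (hK : IsCompact K)
    (huK : ∀ᶠ n in F, u n ∈ K) (hf : Continuous f) :
    f '' {x | MapClusterPt x F u} = {y | MapClusterPt y F (f ∘ u)} := by
  ext y
  constructor
  · rintro ⟨x, hx, rfl⟩
    exact hx.continuousAt_comp hf.continuousAt
  · intro hy
    obtain ⟨x, -, hx, rfl⟩ := hK.exists_mapClusterPt_of_mapClusterPt_comp huK hf hy
    exact ⟨x, hx, rfl⟩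

end ClusterPoints

namespace IsIdeal

variable {I : Set (Set ℕ)} (hI : IsIdeal I)

def dual : Filter ℕ where
  sets := {A | Aᶜ ∈ I}
  univ_sets := by simpa using hI.2.2.1 ∅ Set.finite_empty
  sets_of_superset hA hAB := hI.1 hA (Set.compl_subset_compl.2 hAB)
  inter_sets hA hB := by simpa [Set.compl_inter] using hI.2.1 hA hB

theorem mem_dual {A : Set ℕ} : A ∈ hI.dual ↔ Aᶜ ∈ I := Iff.rfl

theorem iClusterPt_iff_mapClusterPt_s5 {S : Type*} [TopologicalSpace S] {x : ℕ → S} {η : S} :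
    IClusterPt I x η ↔ MapClusterPt η hI.dual x := by
  simp only [(nhds_basis_opens η).mapClusterPt_iff_frequently, Filter.Frequently, Filter.Eventually,
    mem_dual, IClusterPt, Set.compl_ofPred, not_not, and_imp]
  exact forall_congr' fun _ => imp.swap

end IsIdeal

theorem cluster_points_continuous_image {S S' : Type*} [MetricSpace S] [MetricSpace S']
    (I : Set (Set ℕ)) (hI : IsIdeal I) (h : S → S') (hh : Continuous h)
    (x : ℕ → S) (K : Set S) (hK : IsCompact K) (hKx : {n : ℕ | x n ∈ K}ᶜ ∈ I) :
    h '' {η : S | IClusterPt I x η} = {ν : S' | IClusterPt I (fun n => h (x n)) ν} := by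
  simp only [hI.iClusterPt_iff_mapClusterPt_s5]
  exact hK.image_setOf_mapClusterPt (F := hI.dual) hKx hh
end

section
/- Let Φ : ℓ² ⇉ ℓ² be defined by Φ(x) = {(−∑_{i≥1} x_i², y_1, y_2, …) : 2x_i ≤ y_i ≤ x_i + 1/i for all i ≥ 1} ∪ {x/2}. Then for every x ∈ ℓ², Φ(x) is a nonempty compact subset of ℓ². -/
/-- The correspondence Φ on ℓ² from the infinite-dimensional example. -/
def PhiL2 (x : lp (fun _ : ℕ => ℝ) 2) : Set (lp (fun _ : ℕ => ℝ) 2) :=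
  {y : lp (fun _ : ℕ => ℝ) 2 |
      (y 0 = - ∑' i : ℕ, (x (i + 1)) ^ 2) ∧
      ∀ i : ℕ, 1 ≤ i → 2 * x i ≤ y i ∧ y i ≤ x i + 1 / i} ∪
    {(1 / 2 : ℝ) • x}

/-!
Every point of `Φ(x)` is dominated coordinatewise by
`a = 2|x| + (1/i)ᵢ + (∑ᵢ x_{i+1}²) e₀ ∈ ℓ²`, and `Φ(x)` is closed. A box
`{f | ∀ i, ‖f i‖ ≤ a i}` with `a ∈ ℓᵖ`, `p < ∞`, is compact: it is the image of the compact
product of the closed balls of radius `a i`, and this parametrisation is continuous because the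
finite truncations `∑_{i ∈ s} single i (f i)` converge to it uniformly, their error being
bounded by the tail `∑_{i ∉ s} a iᵖ`.
-/

open scoped ENNReal
open Filter

namespace lp

variable {ι : Type*} {E : ι → Type*} [∀ i, NormedAddCommGroup (E i)] {p : ℝ≥0∞}

theorem norm_sub_sum_single_rpow_le [DecidableEq ι] (hp : 0 < p.toReal) {a : ι → ℝ}
    (ha : Memℓp a p) (f : lp E p) (hfa : ∀ i, ‖f i‖ ≤ a i) (s : Finset ι) :
    ‖f - ∑ i ∈ s, lp.single p i (f i)‖ ^ p.toReal ≤ ∑' i : {i // i ∉ s}, a i ^ p.toReal := by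
  have hf : Summable fun i => ‖f i‖ ^ p.toReal := (lp.memℓp f).summable hp
  have ha' : Summable fun i => a i ^ p.toReal := (ha.summable hp).congr fun i => by
    rw [Real.norm_of_nonneg ((norm_nonneg _).trans (hfa i))]
  rw [lp.norm_compl_sum_single hp, ← (hasSum_norm hp f).tsum_eq, ← hf.sum_add_tsum_compl,
    add_sub_cancel_left]
  exact (hf.subtype _).tsum_le_tsum (fun i => Real.rpow_le_rpow (norm_nonneg _) (hfa i) hp.le)
    (ha'.subtype _)

theorem isCompact_setOf_forall_norm_le [Fact (1 ≤ p)] [∀ i, ProperSpace (E i)] (hp : p ≠ ∞)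
    {a : ι → ℝ} (ha : Memℓp a p) : IsCompact {f : lp E p | ∀ i, ‖f i‖ ≤ a i} := by
  classical
  have hp₀ : 0 < p.toReal := ENNReal.toReal_pos (zero_lt_one.trans_le Fact.out).ne' hp
  set B : Set (∀ i, E i) := Set.univ.pi fun i => Metric.closedBall 0 (a i)
  have hB : ∀ b ∈ B, ∀ i, ‖b i‖ ≤ a i := fun b hb i => mem_closedBall_zero_iff.mp (hb i trivial)
  let g : B → lp E p := fun b => ⟨b.1, ha.mono (hB b b.2)⟩
  have hg : Continuous g := by
    have hF : ∀ s : Finset ι, Continuous fun b : B => ∑ i ∈ s, lp.single p i (b.1 i) :=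
      fun s => continuous_finsetSum _ fun i _ =>
        (lp.isometry_single i).continuous.comp (continuous_apply i |>.comp continuous_subtype_val)
    refine TendstoUniformly.continuous ?_ (Frequently.of_forall (f := atTop) hF)
    rw [Metric.tendstoUniformly_iff]
    intro ε hε
    filter_upwards [(tendsto_tsum_compl_atTop_zero fun i => a i ^ p.toReal).eventually
      (gt_mem_nhds (Real.rpow_pos_of_pos hε p.toReal))] with s hs b
    rw [dist_eq_norm, ← Real.rpow_lt_rpow_iff (norm_nonneg _) hε.le hp₀]
    exact (norm_sub_sum_single_rpow_le hp₀ ha (g b) (hB b b.2) s).trans_lt hs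
  have hrange : Set.range g = {f : lp E p | ∀ i, ‖f i‖ ≤ a i} := by
    ext f
    refine ⟨?_, fun hf => ⟨⟨f, fun i _ => mem_closedBall_zero_iff.mpr (hf i)⟩, lp.ext rfl⟩⟩
    rintro ⟨b, rfl⟩
    exact hB b b.2
  have : CompactSpace B :=
    isCompact_iff_compactSpace.mp (isCompact_univ_pi fun i => isCompact_closedBall _ _)
  exact hrange ▸ isCompact_range hg

end lp

theorem memℓp_one_div_natCast {p : ℝ≥0∞} (hp : 1 < p.toReal) :
    Memℓp (fun n : ℕ => 1 / (n : ℝ)) p :=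
  memℓp_gen <| (Real.summable_one_div_nat_rpow.mpr hp).congr fun n => by
    rw [Real.norm_of_nonneg (by positivity), Real.div_rpow zero_le_one n.cast_nonneg,
      Real.one_rpow]

noncomputable def phiL2Bound (x : lp (fun _ : ℕ => ℝ) 2) (i : ℕ) : ℝ :=
  2 * ‖x i‖ + 1 / i + (Pi.single 0 (∑' j : ℕ, x (j + 1) ^ 2) : ℕ → ℝ) i

theorem memℓp_phiL2Bound (x : lp (fun _ : ℕ => ℝ) 2) : Memℓp (phiL2Bound x) 2 := by
  have hsingle : Memℓp (Pi.single 0 (∑' j : ℕ, x (j + 1) ^ 2) : ℕ → ℝ) 2 :=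
    lp.coeFn_single (E := fun _ : ℕ => ℝ) 2 0 _ ▸ (lp.single 2 0 _).2
  exact (((lp.memℓp x).norm.const_mul 2).add (memℓp_one_div_natCast (by norm_num))).add hsingle

theorem norm_le_phiL2Bound {x y : lp (fun _ : ℕ => ℝ) 2} (hy : y ∈ PhiL2 x) (i : ℕ) :
    ‖y i‖ ≤ phiL2Bound x i := by
  have hsum : 0 ≤ ∑' j : ℕ, x (j + 1) ^ 2 := tsum_nonneg fun j => sq_nonneg _
  have hinv : (0 : ℝ) ≤ 1 / i := by positivity
  have hsingle : 0 ≤ (Pi.single 0 (∑' j : ℕ, x (j + 1) ^ 2) : ℕ → ℝ) i :=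
    (Pi.single_nonneg.2 hsum : (0 : ℕ → ℝ) ≤ Pi.single 0 _) i
  rw [phiL2Bound, Real.norm_eq_abs, Real.norm_eq_abs]
  rcases hy with ⟨hy0, hy⟩ | rfl
  · rcases Nat.eq_zero_or_pos i with rfl | hi
    · rw [hy0, abs_neg, abs_of_nonneg hsum, Pi.single_eq_same, Nat.cast_zero, div_zero]
      linarith [abs_nonneg (x 0)]
    · obtain ⟨hlow, hupp⟩ := hy i hi
      rw [abs_le]
      constructor <;> linarith [neg_abs_le (x i), le_abs_self (x i)]
  · rw [lp.coeFn_smul, Pi.smul_apply, smul_eq_mul, abs_mul, abs_of_pos one_half_pos]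
    linarith [abs_nonneg (x i)]

theorem isClosed_PhiL2 (x : lp (fun _ : ℕ => ℝ) 2) : IsClosed (PhiL2 x) := by
  have hev : ∀ i, Continuous fun y : lp (fun _ : ℕ => ℝ) 2 => y i :=
    fun i => (lp.lipschitzWith_one_eval 2 i).continuous
  refine IsClosed.union ?_ isClosed_singleton
  simp only [Set.ofPred_and, Set.ofPred_forall]
  exact (isClosed_eq (hev 0) continuous_const).inter <| isClosed_iInter fun i =>
    isClosed_iInter fun _ => (isClosed_le continuous_const (hev i)).inter
      (isClosed_le (hev i) continuous_const)

theorem PhiL2_nonempty_compact (x : lp (fun _ : ℕ => ℝ) 2) :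
    (PhiL2 x).Nonempty ∧ IsCompact (PhiL2 x) :=
  ⟨⟨_, Or.inr rfl⟩,
    (lp.isCompact_setOf_forall_norm_le (by norm_num) (memℓp_phiL2Bound x)).of_isClosed_subset
      (isClosed_PhiL2 x) fun _ hy => norm_le_phiL2Bound hy⟩
end

section
/- Let Φ : ℓ² ⇉ ℓ² be defined by Φ(x) = {(−∑_{i≥1} x_i², y_1, y_2, …) : 2x_i ≤ y_i ≤ x_i + 1/i for all i ≥ 1} ∪ {x/2}. Then the fixed-point set of Φ is Fix(Φ) = {x ∈ ℓ² : x_0 = −∑_{i≥1} x_i² and x_j ≤ 0 for all j ≥ 1}, and the linear functional u(x) = x_0 restricted to Fix(Φ) has the zero sequence as its unique maximizer. -/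
/-!
A fixed point either comes from the first branch of `PhiL2`, where `2 * x i ≤ x i` forces
`x i ≤ 0`, or satisfies `x = x / 2`, i.e. `x = 0`. On the fixed-point set
`x 0 = -∑ x (i + 1) ^ 2 ≤ 0`, with equality only if every coordinate vanishes.
-/

theorem lp.summable_sq {ι : Type*} (x : lp (fun _ : ι => ℝ) 2) : Summable fun i => x i ^ 2 := by
  simpa only [real_inner_self_eq_norm_sq, Real.norm_eq_abs, sq_abs] using
    lp.summable_inner (𝕜 := ℝ) x x

theorem eq_zero_of_smul_eq_self {K E : Type*} [Field K] [AddCommGroup E] [Module K E]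
    {c : K} {x : E} (hc : c ≠ 1) (h : c • x = x) : x = 0 := by
  by_contra hx
  exact hc (smul_left_injective K hx (h.trans (one_smul K x).symm))

theorem mem_PhiL2_self_iff (x : lp (fun _ : ℕ => ℝ) 2) :
    x ∈ PhiL2 x ↔ x 0 = -∑' i : ℕ, x (i + 1) ^ 2 ∧ ∀ j : ℕ, 1 ≤ j → x j ≤ 0 := by
  constructor
  · rintro (⟨h0, hbounds⟩ | hhalf)
    · exact ⟨h0, fun j hj => by linarith [(hbounds j hj).1]⟩
    · obtain rfl : x = 0 := eq_zero_of_smul_eq_self (by norm_num) hhalf.symm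
      simp
  · rintro ⟨h0, hnonpos⟩
    refine Or.inl ⟨h0, fun i hi => ⟨by linarith [hnonpos i hi], ?_⟩⟩
    linarith [one_div_nonneg.2 (Nat.cast_nonneg (α := ℝ) i)]

theorem apply_zero_lt_zero_of_eq_neg_tsum_sq {x : lp (fun _ : ℕ => ℝ) 2}
    (h0 : x 0 = -∑' i : ℕ, x (i + 1) ^ 2) (hx : x ≠ 0) : x 0 < 0 := by
  obtain ⟨n, hn⟩ : ∃ n, x n ≠ 0 := by
    by_contra! hzero
    exact hx (lp.ext (funext hzero))
  rw [h0, neg_lt_zero]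
  cases n with
  | zero =>
    refine (tsum_nonneg fun _ => sq_nonneg _).lt_of_ne fun htail => hn ?_
    rw [h0, ← htail, neg_zero]
  | succ m =>
    exact ((summable_nat_add_iff 1).2 (lp.summable_sq x)).tsum_pos (fun _ => sq_nonneg _) m
      (sq_pos_of_ne_zero hn)

theorem PhiL2_fixed_points_unique_maximizer :
    ({x : lp (fun _ : ℕ => ℝ) 2 | x ∈ PhiL2 x} =
      {x : lp (fun _ : ℕ => ℝ) 2 |
        x 0 = - ∑' i : ℕ, (x (i + 1)) ^ 2 ∧ ∀ j : ℕ, 1 ≤ j → x j ≤ 0}) ∧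
    ((0 : lp (fun _ : ℕ => ℝ) 2) ∈ {x : lp (fun _ : ℕ => ℝ) 2 | x ∈ PhiL2 x}) ∧
    (∀ x ∈ {x : lp (fun _ : ℕ => ℝ) 2 | x ∈ PhiL2 x}, x 0 ≤ (0 : ℝ)) ∧
    (∀ x ∈ {x : lp (fun _ : ℕ => ℝ) 2 | x ∈ PhiL2 x},
      x ≠ 0 → x 0 < (0 : ℝ)) := by
  refine ⟨Set.ext mem_PhiL2_self_iff, ?_, fun x hx => ?_, fun x hx hne => ?_⟩
  · simp [mem_PhiL2_self_iff]
  · rw [((mem_PhiL2_self_iff x).1 hx).1, neg_nonpos]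
    exact tsum_nonneg fun _ => sq_nonneg _
  · exact apply_zero_lt_zero_of_eq_neg_tsum_sq ((mem_PhiL2_self_iff x).1 hx).1 hne
end
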